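/- arXiv:0707.1430 — 9 statements merged into one kernel-verified Lean document; each statement's English description precedes it below -/
import Mathlib

section
/- A commutative loop is a C-loop if and only if it is an RC-loop; likewise, a commutative loop is a C-loop if and only if it is an LC-loop. -/
/-- A loop operation on `L` with two-sided identity `e` and bijective translations. -/
def IsLoopOp {L : Type*} (mul : L → L → L) (e : L) : Prop :=
  (∀ x, mul e x = x) ∧ (∀ x, mul x e = x) ∧
  (∀ a, Function.Bijective (fun x => mul a x)) ∧
  (∀ a, Function.Bijective (fun x => mul x a))

/-- A quasigroup operation: all translations are bijective. -/
def IsQuasigroupOp {L : Type*} (mul : L → L → L) : Prop :=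
  (∀ a, Function.Bijective (fun x => mul a x)) ∧
  (∀ a, Function.Bijective (fun x => mul x a))

/-- LC identity: (x·(x·y))·z = x·(x·(y·z)). -/
def LCIdent {L : Type*} (mul : L → L → L) : Prop :=
  ∀ x y z, mul (mul x (mul x y)) z = mul x (mul x (mul y z))

/-- RC identity: ((y·z)·x)·x = y·((z·x)·x). -/
def RCIdent {L : Type*} (mul : L → L → L) : Prop :=
  ∀ x y z, mul (mul (mul y z) x) x = mul y (mul (mul z x) x)

/-- C identity: ((y·x)·x)·z = y·(x·(x·z)). -/
def CIdent {L : Type*} (mul : L → L → L) : Prop :=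
  ∀ x y z, mul (mul (mul y x) x) z = mul y (mul x (mul x z))

/-- Commutativity of a binary operation. -/
def CommOp {L : Type*} (mul : L → L → L) : Prop := ∀ x y, mul x y = mul y x

/-- `a` lies in the center of `(L, mul)`. -/
def InCenterOp {L : Type*} (mul : L → L → L) (a : L) : Prop :=
  (∀ x, mul a x = mul x a) ∧
  (∀ x y, mul (mul a x) y = mul a (mul x y)) ∧
  (∀ x y, mul (mul x a) y = mul x (mul a y)) ∧
  (∀ x y, mul (mul x y) a = mul x (mul y a))

/-- Central square: every square lies in the center. -/
def CentralSquareOp {L : Type*} (mul : L → L → L) : Prop :=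
  ∀ x, InCenterOp mul (mul x x)

/-- Alternative: x·(x·y) = (x·x)·y and (y·x)·x = y·(x·x). -/
def AlternativeOp {L : Type*} (mul : L → L → L) : Prop :=
  (∀ x y, mul x (mul x y) = mul (mul x x) y) ∧
  (∀ x y, mul (mul y x) x = mul y (mul x x))

/-- Two binary systems on `L` are isotopic. -/
def Isotopic {L : Type*} (m₁ m₂ : L → L → L) : Prop :=
  ∃ A B C : L → L, Function.Bijective A ∧ Function.Bijective B ∧ Function.Bijective C ∧
    ∀ x y, m₂ (A x) (B y) = C (m₁ x y)

/-! Every C-loop is an LC-loop, commutative or not. Putting `y = e` and `z = e` in the C identity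
gives both alternative laws, after which it says exactly that squares lie in the middle nucleus;
taking `y` to be a left inverse of `x` gives the left inverse property. In a loop with the left
inverse property an element with a middle-nuclear left inverse is left-nuclear, and the inverse of a
square is a square, so squares are left-nuclear: with left alternativity, this is the LC identity.
Conversely, in a commutative loop the LC identity makes squares left-nuclear, hence middle-nuclear,
which gives back the C identity. Finally, the RC identity for `mul` is the LC identity for
`flip mul`, which is `mul` itself when `mul` is commutative. -/

def InLeftNucleus {L : Type*} (mul : L → L → L) (a : L) : Prop :=
  ∀ x y, mul (mul a x) y = mul a (mul x y)

def InMiddleNucleus {L : Type*} (mul : L → L → L) (a : L) : Prop :=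
  ∀ x y, mul (mul x a) y = mul x (mul a y)

def LeftInverseProperty {L : Type*} (mul : L → L → L) (e : L) : Prop :=
  ∀ a b, mul b a = e → ∀ x, mul b (mul a x) = x

section

variable {L : Type*} {mul : L → L → L} {e : L}

local infixl:70 " ⋆ " => mul

theorem CommOp.flip_eq (hcomm : CommOp mul) : flip mul = mul :=
  funext₂ fun x y => hcomm y x

theorem rcIdent_flip_iff_lcIdent : RCIdent (flip mul) ↔ LCIdent mul :=
  ⟨fun h x y z => (h x z y).symm, fun h x y z => (h x z y).symm⟩

theorem IsLoopOp.inLeftNucleus_of_inMiddleNucleus (hloop : IsLoopOp mul e)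
    (hlip : LeftInverseProperty mul e) {a b : L} (hb : InMiddleNucleus mul b) (hba : b ⋆ a = e) :
    InLeftNucleus mul a := by
  intro y w
  obtain ⟨y', hy'⟩ : ∃ y', y' ⋆ y = e := (hloop.2.2.2 y).2 e
  set c := y' ⋆ b
  -- `c ⋆ ·` is inverted by `a ⋆ (y ⋆ ·)` and, `c` being a left inverse of `a ⋆ y`, by `(a ⋆ y) ⋆ ·`.
  have hc : ∀ w, c ⋆ (a ⋆ (y ⋆ w)) = w := fun w => by
    rw [hb, hlip a b hba, hlip y y' hy']
  have hcay : c ⋆ (a ⋆ y) = e := by simpa only [hloop.2.1] using hc e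
  exact (hloop.2.2.1 c).1 (show c ⋆ (a ⋆ y ⋆ w) = c ⋆ (a ⋆ (y ⋆ w)) by rw [hlip _ _ hcay, hc])

namespace CIdent

theorem left_alternative (hC : CIdent mul) (hel : ∀ x, e ⋆ x = x) (x y : L) :
    x ⋆ (x ⋆ y) = x ⋆ x ⋆ y := by
  simpa only [hel] using (hC x e y).symm

theorem right_alternative (hC : CIdent mul) (her : ∀ x, x ⋆ e = x) (x y : L) :
    y ⋆ x ⋆ x = y ⋆ (x ⋆ x) := by
  simpa only [her] using hC x y e

theorem square_inMiddleNucleus (hC : CIdent mul) (hel : ∀ x, e ⋆ x = x) (her : ∀ x, x ⋆ e = x)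
    (x : L) : InMiddleNucleus mul (x ⋆ x) := fun y z => by
  have h := hC x y z
  rwa [hC.right_alternative her, hC.left_alternative hel] at h

theorem leftInverseProperty (hC : CIdent mul) (hloop : IsLoopOp mul e) :
    LeftInverseProperty mul e := by
  intro a b hba v
  obtain ⟨w, rfl⟩ := (hloop.2.2.1 a).2 v
  simpa only [hba, hloop.1] using (hC a b w).symm

theorem square_inLeftNucleus (hC : CIdent mul) (hloop : IsLoopOp mul e) (x : L) :
    InLeftNucleus mul (x ⋆ x) := by
  obtain ⟨x', hx'⟩ : ∃ x', x' ⋆ x = e := (hloop.2.2.2 x).2 e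
  refine hloop.inLeftNucleus_of_inMiddleNucleus (hC.leftInverseProperty hloop)
    (hC.square_inMiddleNucleus hloop.1 hloop.2.1 x') ?_
  calc x' ⋆ x' ⋆ (x ⋆ x) = x' ⋆ x' ⋆ x ⋆ x := (hC.right_alternative hloop.2.1 x _).symm
    _ = x' ⋆ (x' ⋆ x) ⋆ x := by rw [hC.left_alternative hloop.1]
    _ = e := by rw [hx', hloop.2.1, hx']

theorem lcIdent (hC : CIdent mul) (hloop : IsLoopOp mul e) : LCIdent mul := fun x y z => by
  rw [hC.left_alternative hloop.1, hC.left_alternative hloop.1, hC.square_inLeftNucleus hloop x]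

end CIdent

namespace LCIdent

theorem left_alternative (hLC : LCIdent mul) (hel : ∀ x, e ⋆ x = x) (her : ∀ x, x ⋆ e = x)
    (x y : L) : x ⋆ (x ⋆ y) = x ⋆ x ⋆ y := by
  simpa only [hel, her] using (hLC x e y).symm

theorem square_inLeftNucleus (hLC : LCIdent mul) (hel : ∀ x, e ⋆ x = x) (her : ∀ x, x ⋆ e = x)
    (x : L) : InLeftNucleus mul (x ⋆ x) := fun y z => by
  have h := hLC x y z
  rwa [hLC.left_alternative hel her, hLC.left_alternative hel her] at h

theorem cIdent_of_comm (hLC : LCIdent mul) (hcomm : CommOp mul) (hel : ∀ x, e ⋆ x = x)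
    (her : ∀ x, x ⋆ e = x) : CIdent mul := fun x y z => by
  have hsq := hLC.square_inLeftNucleus hel her x
  calc y ⋆ x ⋆ x ⋆ z = x ⋆ x ⋆ y ⋆ z := by
        rw [hcomm y x, hcomm (x ⋆ y) x, hLC.left_alternative hel her]
    _ = x ⋆ x ⋆ (z ⋆ y) := by rw [hsq, hcomm y z]
    _ = y ⋆ (x ⋆ x ⋆ z) := by rw [← hsq, hcomm]
    _ = y ⋆ (x ⋆ (x ⋆ z)) := by rw [hLC.left_alternative hel her]

end LCIdent

end

/-- A commutative loop is a C-loop iff it is an RC-loop;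
likewise it is a C-loop iff it is an LC-loop. -/
theorem stmt1 {L : Type*} (mul : L → L → L) (e : L)
    (hloop : IsLoopOp mul e) (hcomm : CommOp mul) :
    (CIdent mul ↔ RCIdent mul) ∧ (CIdent mul ↔ LCIdent mul) := by
  have hRL : RCIdent mul ↔ LCIdent mul := by
    rw [← rcIdent_flip_iff_lcIdent, hcomm.flip_eq]
  have hCL : CIdent mul ↔ LCIdent mul :=
    ⟨fun hC => hC.lcIdent hloop, fun hLC => hLC.cIdent_of_comm hcomm hloop.1 hloop.2.1⟩
  exact ⟨hCL.trans hRL.symm, hCL⟩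
end

section
/- Let (L,·) be a commutative LC-loop with identity e, let a ∈ L and set B = L_a (note L_a = R_a by commutativity), and let (L,∘) be a commutative loop such that (I,B,B) is an isotopism from (L,·) to (L,∘), i.e. x ∘ (a·y) = (x·y)·a for all x,y. Then: (1) (L,·) is a commutative C-loop; (2) the operation ∘ coincides with the right derivative F_{a⁻¹} of (L,·) with respect to a⁻¹ and also with the left derivative F^{a⁻¹} of (L,·) with respect to a⁻¹; and (3) (L,∘) is a commutative C-loop. -/
/-!
Commutativity of `∘` pushed through the isotopism gives `(a·u)·v = (a·v)·u`. Combined with the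
left alternative law and the associativity of squares that the LC identity yields in a loop,
this forces `x·(a·t) = a·(x·t)`: left translations by `a`, and hence by `a⁻¹`, commute with all
left translations. Consequently `x ∘ y = (x·(a⁻¹·y))·a = x·y`, so both derivatives at `a⁻¹`
reduce to `·`, and a commutative LC-loop is a C-loop.
-/

section LCLoop

variable {L : Type*} {mul : L → L → L} {e : L}

theorem LCIdent.mul_self_mul (hLC : LCIdent mul) (he₁ : ∀ x, mul e x = x)
    (he₂ : ∀ x, mul x e = x) (x z : L) : mul (mul x x) z = mul x (mul x z) := by
  simpa only [he₁, he₂] using hLC x e z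

theorem LCIdent.mul_self_mul_assoc (hLC : LCIdent mul) (he₁ : ∀ x, mul e x = x)
    (he₂ : ∀ x, mul x e = x) (x u v : L) :
    mul (mul (mul x x) u) v = mul (mul x x) (mul u v) := by
  simpa only [← hLC.mul_self_mul he₁ he₂] using hLC x u v

theorem LCIdent.cIdent_of_commOp (hLC : LCIdent mul) (hcomm : CommOp mul)
    (he₁ : ∀ x, mul e x = x) (he₂ : ∀ x, mul x e = x) : CIdent mul := by
  intro x y z
  have hsq := hLC.mul_self_mul_assoc he₁ he₂
  calc mul (mul (mul y x) x) z
      = mul (mul (mul x x) y) z := by rw [hcomm y x, hcomm (mul x y) x, hLC.mul_self_mul he₁ he₂]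
    _ = mul y (mul (mul x x) z) := by rw [hsq, hcomm y (mul (mul x x) z), hsq, hcomm z y]
    _ = mul y (mul x (mul x z)) := by rw [hLC.mul_self_mul he₁ he₂]

end LCLoop

section Isotopism

variable {L : Type*} {mul circ : L → L → L} {e a a' : L}

theorem mul_right_comm_of_isotopism (hcomm₂ : CommOp circ)
    (hiso : ∀ x y, circ x (mul a y) = mul (mul x y) a)
    (hcancel : Function.Injective fun x => mul x a) (u v : L) :
    mul (mul a u) v = mul (mul a v) u :=
  hcancel <| by simpa only [hiso] using hcomm₂ (mul a u) (mul a v)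

theorem mul_left_comm_of_mul_right_comm (hLC : LCIdent mul) (hcomm : CommOp mul)
    (he₁ : ∀ x, mul e x = x) (he₂ : ∀ x, mul x e = x)
    (hcancel : ∀ c, Function.Injective fun x => mul c x)
    (hright_comm : ∀ u v, mul (mul a u) v = mul (mul a v) u) (x t : L) :
    mul x (mul a t) = mul a (mul x t) := by
  have halt := hLC.mul_self_mul he₁ he₂
  have hsq := hLC.mul_self_mul_assoc he₁ he₂
  have hshift : ∀ y s, mul (mul a y) s = mul y (mul a s) := fun y s => by
    rw [hright_comm, hcomm]
  -- Both sides of the cancelled identity equal `(a·a)·(x·(x·t))`.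
  have hlhs : mul x (mul a (mul x (mul a t))) = mul (mul a a) (mul x (mul x t)) := by
    calc mul x (mul a (mul x (mul a t)))
        = mul (mul a x) (mul (mul a x) t) := by rw [hshift x t, hshift x]
      _ = mul (mul (mul a a) (mul x x)) t := by
        rw [← halt (mul a x) t, hright_comm x (mul a x), ← halt a x, hsq a x x]
      _ = mul (mul a a) (mul x (mul x t)) := by rw [hsq a (mul x x) t, halt x t]
  have hrhs : mul x (mul a (mul a (mul x t))) = mul (mul a a) (mul x (mul x t)) := by
    rw [← halt a, hcomm, hsq, hcomm (mul x t)]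
  exact hcancel a (hcancel x (hlhs.trans hrhs.symm))

theorem mul_left_comm_of_left_inverse (hcancel : Function.Injective fun x => mul a x)
    (hinv : ∀ v, mul a (mul a' v) = v)
    (hleft_comm : ∀ x t, mul x (mul a t) = mul a (mul x t)) (x t : L) :
    mul x (mul a' t) = mul a' (mul x t) :=
  hcancel <| by dsimp only; rw [← hleft_comm x, hinv, hinv]

end Isotopism

theorem stmt2_general {L : Type*} (mul circ : L → L → L) (e a a' : L)
    (hloop : IsLoopOp mul e) (hcomm : CommOp mul) (hLC : LCIdent mul)
    (hinv : mul a a' = e ∧ mul a' a = e)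
    (hcomm₂ : CommOp circ)
    (hiso : ∀ x y, circ x (mul a y) = mul (mul x y) a) :
    (CIdent mul ∧ CommOp mul) ∧
    ((∀ x y, mul (circ x y) a' = mul x (mul y a')) ∧
     (∀ x y, mul a' (circ x y) = mul (mul a' x) y)) ∧
    (CIdent circ ∧ CommOp circ) := by
  obtain ⟨he₁, he₂, hbl, hbr⟩ := hloop
  have hC : CIdent mul := hLC.cIdent_of_commOp hcomm he₁ he₂
  have hright_comm := mul_right_comm_of_isotopism hcomm₂ hiso (hbr a).injective
  have hinv_left : ∀ v, mul a (mul a' v) = v := fun v => (hbl a').injective <| by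
    simpa only [hinv.1, he₁, hcomm a'] using (hright_comm a' (mul a' v)).symm
  have hleft_comm := mul_left_comm_of_mul_right_comm hLC hcomm he₁ he₂
    (fun c => (hbl c).injective) hright_comm
  have hleft_comm' := mul_left_comm_of_left_inverse (hbl a).injective hinv_left hleft_comm
  have hcirc : circ = mul := by
    funext x y
    rw [← hinv_left y, hiso, hcomm _ a, ← hleft_comm]
  refine ⟨⟨hC, hcomm⟩, ⟨fun x y => ?_, fun x y => ?_⟩, hcirc ▸ hC, hcomm₂⟩
  · rw [hcirc, hcomm (mul x y) a', hcomm y a', hleft_comm' x y]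
  · rw [hcirc, hcomm (mul a' x) y, hleft_comm' y x, hcomm y x]

/-- For a commutative LC-loop `(L,·)` with identity `e`, `a ∈ L`,
and a commutative loop `(L,∘)` with `(I, L_a, L_a)` an isotopism from `(L,·)` to `(L,∘)`
(i.e. x ∘ (a·y) = (x·y)·a): (1) `(L,·)` is a commutative C-loop;
(2) `∘` coincides with the right derivative `F_{a⁻¹}` (i.e. (x∘y)·a⁻¹ = x·(y·a⁻¹))
and with the left derivative `F^{a⁻¹}` (i.e. a⁻¹·(x∘y) = (a⁻¹·x)·y);
(3) `(L,∘)` is a commutative C-loop. -/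
theorem stmt2 {L : Type*} (mul circ : L → L → L) (e e₂ a a' : L)
    (hloop : IsLoopOp mul e) (hcomm : CommOp mul) (hLC : LCIdent mul)
    (hinv : mul a a' = e ∧ mul a' a = e)
    (hloop₂ : IsLoopOp circ e₂) (hcomm₂ : CommOp circ)
    (hiso : ∀ x y, circ x (mul a y) = mul (mul x y) a) :
    (CIdent mul ∧ CommOp mul) ∧
    ((∀ x y, mul (circ x y) a' = mul x (mul y a')) ∧
     (∀ x y, mul a' (circ x y) = mul (mul a' x) y)) ∧
    (CIdent circ ∧ CommOp circ) :=
  stmt2_general mul circ e a a' hloop hcomm hLC hinv hcomm₂ hiso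
end

section
/- Let (L,·) be a commutative C-loop with identity e, let a ∈ L and set B = L_a (= R_a by commutativity), and let (L,∘) be a commutative loop such that (B,I,B) is an isotopism from (L,·) to (L,∘), i.e. (a·x) ∘ y = (x·y)·a for all x,y. Then: (1) the operation ∘ coincides with the left derivative F^{a⁻¹} and with the right derivative F_{a⁻¹} of (L,·) with respect to a⁻¹, and (L,∘) is a commutative C-loop; (2) (L,∘) is isomorphic to the f,g-isotopes F_{a⁻¹,e} and F_{e,a⁻¹}, and hence F_{a⁻¹,e} and F_{e,a⁻¹} are commutative C-loops. -/
/-! The hypothesis that `∘` is commutative is strong: comparing `(a·x) ∘ (a·y)` with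
`(a·y) ∘ (a·x)` shows that `a` lies in the middle nucleus of `(L,·)`. In a commutative C-loop the
inverse property `a⁻¹·(a·w) = w` then moves `a⁻¹`, and with it `a`, into the left nucleus, hence
into the center. Once `a` is central, `(a·x) ∘ y = a·(x·y) = (a·x)·y`, so `∘` is `·` itself, both
derivatives at the central element `a⁻¹` are `·` as well, and both f,g-isotopes are
`x ⊛ y = a·(x·y)`, which `L_a` maps isomorphically onto `(L,·)`. -/

section Transport

variable {L : Type*} {s mul : L → L → L} {e : L} (α : L ≃ L)

theorem eq_symm_apply_of_hom (hα : ∀ x y, α (s x y) = mul (α x) (α y)) (x y : L) :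
    s x y = α.symm (mul (α x) (α y)) := by
  rw [← hα, Equiv.symm_apply_apply]

theorem IsLoopOp.of_equiv (hα : ∀ x y, α (s x y) = mul (α x) (α y)) (hloop : IsLoopOp mul e) :
    IsLoopOp s (α.symm e) := by
  obtain ⟨hle, hre, hlb, hrb⟩ := hloop
  have hs := eq_symm_apply_of_hom α hα
  refine ⟨fun x => ?_, fun x => ?_, fun u => ?_, fun u => ?_⟩
  · simp [hs, hle]
  · simp [hs, hre]
  · have : (fun x => s u x) = α.symm ∘ (fun x => mul (α u) x) ∘ α := funext (hs u)
    exact this ▸ α.symm.bijective.comp ((hlb _).comp α.bijective)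
  · have : (fun x => s x u) = α.symm ∘ (fun x => mul x (α u)) ∘ α := funext (hs · u)
    exact this ▸ α.symm.bijective.comp ((hrb _).comp α.bijective)

theorem CIdent.of_equiv (hα : ∀ x y, α (s x y) = mul (α x) (α y)) (hC : CIdent mul) :
    CIdent s := by
  intro x y z
  simp only [eq_symm_apply_of_hom α hα, Equiv.apply_symm_apply]
  rw [hC]

theorem CommOp.of_equiv (hα : ∀ x y, α (s x y) = mul (α x) (α y)) (hcomm : CommOp mul) :
    CommOp s := by
  intro x y
  rw [eq_symm_apply_of_hom α hα, eq_symm_apply_of_hom α hα y, hcomm]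

end Transport

section CommutativeCLoop

variable {L : Type*} {mul : L → L → L} {e : L}

theorem CIdent.inv_mul_cancel_left (hloop : IsLoopOp mul e) (hC : CIdent mul) {g g' : L}
    (h : mul g' g = e) (w : L) : mul g' (mul g w) = w := by
  obtain ⟨z, rfl⟩ := (hloop.2.2.1 g).2 w
  have := hC g g' z
  rwa [h, hloop.1, eq_comm] at this

theorem InCenterOp.of_left_assoc (hcomm : CommOp mul) {a : L}
    (ha : ∀ x y, mul (mul a x) y = mul a (mul x y)) : InCenterOp mul a := by
  refine ⟨fun x => hcomm a x, ha, fun x y => ?_, fun x y => ?_⟩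
  · rw [hcomm x a, ha, hcomm x (mul a y), ha, hcomm y x]
  · rw [hcomm y a, hcomm x (mul a y), ha, hcomm y x, hcomm (mul x y) a]

theorem left_assoc_of_inv_left_assoc {a a' : L} (hcancel : ∀ w, mul a (mul a' w) = w)
    (hcancel' : ∀ w, mul a' (mul a w) = w)
    (ha' : ∀ x y, mul (mul a' x) y = mul a' (mul x y)) (x y : L) :
    mul (mul a x) y = mul a (mul x y) := by
  conv_rhs => rw [← hcancel' x, ha', hcancel]

theorem middle_assoc_of_commOp_isotope {circ : L → L → L} (hcomm : CommOp mul)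
    (hcomm₂ : CommOp circ) {a : L} (hcancel : Function.Injective (fun x => mul x a))
    (hiso : ∀ x y, circ (mul a x) y = mul (mul x y) a) (x y : L) :
    mul (mul x a) y = mul x (mul a y) := by
  have hswap : mul x (mul a y) = mul y (mul a x) :=
    hcancel (by simp only [← hiso]; exact hcomm₂ _ _)
  rw [hswap, hcomm y, hcomm x]

theorem CIdent.inv_left_assoc_of_middle_assoc (hloop : IsLoopOp mul e) (hcomm : CommOp mul)
    (hC : CIdent mul) {a a' : L} (hinv : mul a' a = e)
    (ha : ∀ x y, mul (mul x a) y = mul x (mul a y)) (q z : L) :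
    mul (mul a' q) z = mul a' (mul q z) := by
  obtain ⟨p, hqp⟩ := (hloop.2.2.1 q).2 e
  have hpq : mul p q = e := (hcomm p q).trans hqp
  have hshift : ∀ v, mul (mul p a) (mul a' v) = mul p v := fun v => by
    rw [ha, hC.inv_mul_cancel_left hloop ((hcomm a a').trans hinv)]
  -- `p·a` is an inverse of `a'·q`, so the inverse property cancels it
  have hinv' : mul (mul a' q) (mul p a) = e := by rw [hcomm, hshift, hpq]
  have key := hC.inv_mul_cancel_left hloop hinv' (mul a' (mul q z))
  rwa [hshift, hC.inv_mul_cancel_left hloop hpq] at key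

theorem eq_of_isotope_of_inCenterOp {circ : L → L → L} {a a' : L} (ha : InCenterOp mul a)
    (hcancel : ∀ w, mul a (mul a' w) = w) (hiso : ∀ x y, circ (mul a x) y = mul (mul x y) a) :
    circ = mul := by
  funext u v
  rw [← hcancel u, hiso, ← ha.1, ha.2.1]

theorem InCenterOp.mul_mul_mul_distrib {a : L} (ha : InCenterOp mul a) (x y : L) :
    mul a (mul a (mul x y)) = mul (mul a x) (mul a y) := by
  rw [ha.2.1, ← ha.2.2.1 x y, ← ha.1 x, ha.2.1]

theorem InCenterOp.exists_iso_and_commCLoop_of_twist (hloop : IsLoopOp mul e)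
    (hcomm : CommOp mul) (hC : CIdent mul) {a : L} (ha : InCenterOp mul a) {s : L → L → L}
    (hs : ∀ x y, s x y = mul a (mul x y)) :
    (∃ α : L → L, Function.Bijective α ∧ ∀ x y, α (s x y) = mul (α x) (α y)) ∧
      ((∃ e', IsLoopOp s e') ∧ CIdent s ∧ CommOp s) := by
  let α : L ≃ L := .ofBijective _ (hloop.2.2.1 a)
  have hα : ∀ x y, α (s x y) = mul (α x) (α y) := fun x y => by
    simp only [α, Equiv.ofBijective_apply, hs, ha.mul_mul_mul_distrib]
  exact ⟨⟨α, α.bijective, hα⟩, ⟨_, .of_equiv α hα hloop⟩, .of_equiv α hα hC,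
    .of_equiv α hα hcomm⟩

end CommutativeCLoop

theorem stmt4_general {L : Type*} (mul circ star star2 : L → L → L) (e a a' : L)
    (hloop : IsLoopOp mul e) (hcomm : CommOp mul) (hC : CIdent mul)
    (hinv : mul a a' = e ∧ mul a' a = e)
    (hcomm₂ : CommOp circ)
    (hiso : ∀ x y, circ (mul a x) y = mul (mul x y) a)
    (hstar : ∀ x y, star (mul x e) (mul a' y) = mul x y)
    (hstar2 : ∀ x y, star2 (mul x a') (mul e y) = mul x y) :
    ((∀ x y, mul a' (circ x y) = mul (mul a' x) y) ∧
     (∀ x y, mul (circ x y) a' = mul x (mul y a')) ∧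
     CIdent circ ∧ CommOp circ) ∧
    ((∃ α : L → L, Function.Bijective α ∧ ∀ x y, α (star x y) = circ (α x) (α y)) ∧
     (∃ β : L → L, Function.Bijective β ∧ ∀ x y, β (star2 x y) = circ (β x) (β y)) ∧
     ((∃ e₃, IsLoopOp star e₃) ∧ CIdent star ∧ CommOp star) ∧
     ((∃ e₄, IsLoopOp star2 e₄) ∧ CIdent star2 ∧ CommOp star2)) := by
  obtain ⟨haa', ha'a⟩ := hinv
  have hcancel : ∀ w, mul a (mul a' w) = w := hC.inv_mul_cancel_left hloop haa'
  have hcancel' : ∀ w, mul a' (mul a w) = w := hC.inv_mul_cancel_left hloop ha'a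
  have ha'_left := hC.inv_left_assoc_of_middle_assoc hloop hcomm ha'a
    (middle_assoc_of_commOp_isotope hcomm hcomm₂ (hloop.2.2.2 a).1 hiso)
  have ha' : InCenterOp mul a' := .of_left_assoc hcomm ha'_left
  have ha : InCenterOp mul a :=
    .of_left_assoc hcomm (left_assoc_of_inv_left_assoc hcancel hcancel' ha'_left)
  have hcirc : circ = mul := eq_of_isotope_of_inCenterOp ha hcancel hiso
  subst circ
  have hstar_eq : ∀ x y, star x y = mul a (mul x y) := fun x y => by
    have := hstar x (mul a y)
    rwa [hloop.2.1, hcancel', ← ha.2.2.1, ← ha.1, ha.2.1] at this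
  have hstar2_eq : ∀ x y, star2 x y = mul a (mul x y) := fun x y => by
    have := hstar2 (mul a x) y
    rwa [hcomm _ a', hcancel', hloop.1, ha.2.1] at this
  obtain ⟨hiso₁, hstar_loop⟩ := ha.exists_iso_and_commCLoop_of_twist hloop hcomm hC hstar_eq
  obtain ⟨hiso₂, hstar2_loop⟩ :=
    ha.exists_iso_and_commCLoop_of_twist hloop hcomm hC hstar2_eq
  exact ⟨⟨fun x y => (ha'.2.1 x y).symm, ha'.2.2.2, hC, hcomm₂⟩, hiso₁, hiso₂, hstar_loop,
    hstar2_loop⟩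

/-- For a commutative C-loop `(L,·)` with identity `e`, `a ∈ L`,
and a commutative loop `(L,∘)` with `(L_a, I, L_a)` an isotopism from `(L,·)` to `(L,∘)`
(i.e. (a·x) ∘ y = (x·y)·a): (1) `∘` coincides with the left derivative `F^{a⁻¹}`
and with the right derivative `F_{a⁻¹}`, and `(L,∘)` is a commutative C-loop;
(2) `(L,∘)` is isomorphic to the f,g-isotopes `F_{a⁻¹,e}` and `F_{e,a⁻¹}`,
and both of those are commutative C-loops. -/
theorem stmt4 {L : Type*} (mul circ star star2 : L → L → L) (e e₂ a a' : L)
    (hloop : IsLoopOp mul e) (hcomm : CommOp mul) (hC : CIdent mul)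
    (hinv : mul a a' = e ∧ mul a' a = e)
    (hloop₂ : IsLoopOp circ e₂) (hcomm₂ : CommOp circ)
    (hiso : ∀ x y, circ (mul a x) y = mul (mul x y) a)
    (hstar : ∀ x y, star (mul x e) (mul a' y) = mul x y)
    (hstar2 : ∀ x y, star2 (mul x a') (mul e y) = mul x y) :
    ((∀ x y, mul a' (circ x y) = mul (mul a' x) y) ∧
     (∀ x y, mul (circ x y) a' = mul x (mul y a')) ∧
     CIdent circ ∧ CommOp circ) ∧
    ((∃ α : L → L, Function.Bijective α ∧ ∀ x y, α (star x y) = circ (α x) (α y)) ∧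
     (∃ β : L → L, Function.Bijective β ∧ ∀ x y, β (star2 x y) = circ (β x) (β y)) ∧
     ((∃ e₃, IsLoopOp star e₃) ∧ CIdent star ∧ CommOp star) ∧
     ((∃ e₄, IsLoopOp star2 e₄) ∧ CIdent star2 ∧ CommOp star2)) :=
  stmt4_general mul circ star star2 e a a' hloop hcomm hC hinv hcomm₂ hiso hstar hstar2
end

section
/- Let (L,·) be a commutative loop with identity e which is an LC-loop, an RC-loop, or a C-loop; let a ∈ L, set B = L_a (= R_a by commutativity), and let (L,∘) be a commutative loop such that (I,B,B) is an isotopism from (L,·) to (L,∘). Let ∗ denote the operation of the f,g-isotope F_{a⁻¹,e} and ⋆ the operation of F_{e,a⁻¹}. Then (L,·), (L,∘), (L,∗) and (L,⋆) are pairwise isotopic commutative C-loops, and the following generalized distributive laws hold for all x,y ∈ L: a·(x∗y) = (a·x)∘(y·a), (x∗y)·a = (x·a)∘(y·a), a·(x⋆y) = (a·x)∘(y·a), and (x⋆y)·a = (x·a)∘(y·a). -/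
/-! Commutativity of `∘`, pulled back along the isotopism `(I, L_a, R_a)`, puts `a` into the
middle nucleus of `(L,·)`, which is a commutative C-loop (commutative LC- and RC-loops are
C-loops). Hence `x ∗ y = x·(a·y) = x ⋆ y`; a principal isotope of a commutative C-loop by a
middle-nuclear element is again a commutative C-loop, and `L_a` is an isomorphism from `(L,∗)`
onto `(L,∘)`, which gives the C identity for `∘` and the distributive laws. -/

def InMiddleNucleusOp {L : Type*} (mul : L → L → L) (a : L) : Prop :=
  ∀ x y, mul (mul x a) y = mul x (mul a y)

section LoopIdentities

variable {L : Type*} {m : L → L → L} {e : L}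

theorem LCIdent.cIdent (h : LCIdent m) (hc : CommOp m) (hle : ∀ x, m e x = x)
    (hre : ∀ x, m x e = x) : CIdent m := by
  have lalt : ∀ x z, m (m x x) z = m x (m x z) := fun x z => by
    simpa only [hle, hre] using h x e z
  have sq_mul_assoc : ∀ x y z, m (m (m x x) y) z = m (m x x) (m y z) := fun x y z => by
    simpa only [← lalt] using h x y z
  intro x y z
  calc m (m (m y x) x) z = m (m (m x x) y) z := by rw [hc (m y x), hc y, lalt]
    _ = m (m (m x x) z) y := by rw [sq_mul_assoc, sq_mul_assoc, hc y]
    _ = m y (m x (m x z)) := by rw [hc, lalt]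

theorem RCIdent.cIdent (h : RCIdent m) (hc : CommOp m) (hle : ∀ x, m e x = x)
    (hre : ∀ x, m x e = x) : CIdent m := by
  have ralt : ∀ x y, m (m y x) x = m y (m x x) := fun x y => by
    simpa only [hle, hre] using h x y e
  have mul_sq_assoc : ∀ x y z, m (m y z) (m x x) = m y (m z (m x x)) := fun x y z => by
    simpa only [ralt] using h x y z
  intro x y z
  calc m (m (m y x) x) z = m z (m y (m x x)) := by rw [ralt, hc]
    _ = m y (m z (m x x)) := by rw [← mul_sq_assoc, hc z y, mul_sq_assoc]
    _ = m y (m x (m x z)) := by rw [← ralt, hc (m z x), hc z]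

namespace CIdent

variable (hC : CIdent m)
include hC

theorem mul_self_mul (hle : ∀ x, m e x = x) (x z : L) : m (m x x) z = m x (m x z) := by
  simpa only [hle] using hC x e z

theorem mul_mul_self (hre : ∀ x, m x e = x) (x y : L) : m (m y x) x = m y (m x x) := by
  simpa only [hre] using hC x y e

theorem mul_mul_self_mul (hle : ∀ x, m e x = x) (hre : ∀ x, m x e = x) (x y z : L) :
    m (m y (m x x)) z = m y (m (m x x) z) := by
  simpa only [hC.mul_mul_self hre, ← hC.mul_self_mul hle] using hC x y z

theorem of_surjective_hom {m' : L → L → L} {φ : L → L} (hφ : Function.Surjective φ)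
    (hhom : ∀ x y, φ (m x y) = m' (φ x) (φ y)) : CIdent m' := by
  intro x y z
  obtain ⟨x, rfl⟩ := hφ x
  obtain ⟨y, rfl⟩ := hφ y
  obtain ⟨z, rfl⟩ := hφ z
  simp only [← hhom, hC x y z]

theorem isotope (hc : CommOp m) (hle : ∀ x, m e x = x) (hre : ∀ x, m x e = x) {a : L}
    (ha : InMiddleNucleusOp m a) : CIdent (fun x y => m x (m a y)) := by
  intro x y z
  have hsq : m x (m a (m x (m a z))) = m (m (m a x) (m a x)) z := by
    rw [← ha x (m x (m a z)), ← ha x z, hc x a, ← hC.mul_self_mul hle]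
  calc m (m (m y (m a x)) (m a x)) (m a z)
      = m y (m (m (m a x) (m a x)) (m a z)) := by
        rw [hC.mul_mul_self hre, hC.mul_mul_self_mul hle hre]
    _ = m y (m a (m x (m a (m x (m a z))))) := by
        rw [hsq, ← hC.mul_mul_self_mul hle hre (m a x) a z, hc a (m (m a x) (m a x)), ha]

end CIdent

theorem CommOp.isotope (hc : CommOp m) {a : L} (ha : InMiddleNucleusOp m a) :
    CommOp (fun x y => m x (m a y)) := by
  intro x y
  show m x (m a y) = m y (m a x)
  rw [← ha, hc x a, hc]

theorem IsLoopOp.isotope (h : IsLoopOp m e) {a a' : L} (haa' : m a a' = e)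
    (hcancel : ∀ z, m a' (m a z) = z) : IsLoopOp (fun x y => m x (m a y)) a' := by
  obtain ⟨-, hre, hL, hR⟩ := h
  exact ⟨hcancel, fun x => by simp only [haa', hre], fun c => (hL c).comp (hL a),
    fun c => hR (m a c)⟩

theorem inMiddleNucleusOp_of_isotope (hc : CommOp m) {circ : L → L → L} (hcirc : CommOp circ)
    {a : L} (ha : Function.Injective (fun x => m x a))
    (hiso : ∀ x y, circ x (m a y) = m (m x y) a) : InMiddleNucleusOp m a := by
  intro s t
  have hswap : m (m a s) t = m (m a t) s := ha (by simp only [← hiso]; exact hcirc _ _)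
  rw [hc s a, hswap, hc]

end LoopIdentities

namespace Isotopic

variable {L : Type*} {m₁ m₂ m₃ : L → L → L}

theorem symm (h : Isotopic m₁ m₂) : Isotopic m₂ m₁ := by
  obtain ⟨A, B, C, hA, hB, hC, hABC⟩ := h
  let eA := Equiv.ofBijective A hA
  let eB := Equiv.ofBijective B hB
  let eC := Equiv.ofBijective C hC
  refine ⟨eA.symm, eB.symm, eC.symm, eA.symm.bijective, eB.symm.bijective, eC.symm.bijective,
    fun x y => eC.injective ?_⟩
  simp only [Equiv.apply_symm_apply]
  exact (hABC _ _).symm.trans (by simp only [eA, eB, Equiv.ofBijective_apply_symm_apply])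

theorem trans (h₁₂ : Isotopic m₁ m₂) (h₂₃ : Isotopic m₂ m₃) : Isotopic m₁ m₃ := by
  obtain ⟨A, B, C, hA, hB, hC, hABC⟩ := h₁₂
  obtain ⟨A', B', C', hA', hB', hC', hABC'⟩ := h₂₃
  exact ⟨A' ∘ A, B' ∘ B, C' ∘ C, hA'.comp hA, hB'.comp hB, hC'.comp hC,
    fun x y => by simp only [Function.comp_apply, hABC', hABC]⟩

end Isotopic

theorem stmt5_general {L : Type*} (mul circ star star2 : L → L → L) (e a a' : L)
    (hloop : IsLoopOp mul e) (hcomm : CommOp mul)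
    (hkind : LCIdent mul ∨ RCIdent mul ∨ CIdent mul)
    (hinv : mul a a' = e ∧ mul a' a = e)
    (hcomm₂ : CommOp circ)
    (hiso : ∀ x y, circ x (mul a y) = mul (mul x y) a)
    (hstar : ∀ x y, star (mul x e) (mul a' y) = mul x y)
    (hstar2 : ∀ x y, star2 (mul x a') (mul e y) = mul x y) :
    ((CIdent mul ∧ CommOp mul) ∧ (CIdent circ ∧ CommOp circ) ∧
     ((∃ e₃, IsLoopOp star e₃) ∧ CIdent star ∧ CommOp star) ∧
     ((∃ e₄, IsLoopOp star2 e₄) ∧ CIdent star2 ∧ CommOp star2)) ∧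
    (Isotopic mul circ ∧ Isotopic mul star ∧ Isotopic mul star2 ∧
     Isotopic circ star ∧ Isotopic circ star2 ∧ Isotopic star star2) ∧
    ((∀ x y, mul a (star x y) = circ (mul a x) (mul y a)) ∧
     (∀ x y, mul (star x y) a = circ (mul x a) (mul y a)) ∧
     (∀ x y, mul a (star2 x y) = circ (mul a x) (mul y a)) ∧
     (∀ x y, mul (star2 x y) a = circ (mul x a) (mul y a))) := by
  have ⟨hle, hre, hL, hR⟩ := hloop
  have hC : CIdent mul := by
    rcases hkind with h | h | h
    exacts [h.cIdent hcomm hle hre, h.cIdent hcomm hle hre, h]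
  have ha : InMiddleNucleusOp mul a := inMiddleNucleusOp_of_isotope hcomm hcomm₂ (hR a).1 hiso
  have hcancel : ∀ z, mul a' (mul a z) = z := fun z => by rw [← ha, hinv.2, hle]
  have hmul_star : Isotopic mul star :=
    ⟨id, mul a', id, Function.bijective_id, hL a', Function.bijective_id,
      fun x y => by simpa only [hre, id_eq] using hstar x y⟩
  have hstar_eq : star = fun x y => mul x (mul a y) := funext₂ fun x y => by
    simpa only [hre, hcancel] using hstar x (mul a y)
  have hstar2_eq : star2 = star := funext₂ fun x y => by
    have h := hstar2 (mul a x) y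
    rw [hle, hcomm _ a', hcancel, hcomm a x, ha] at h
    rw [h, hstar_eq]
  have hdistrib : ∀ x y, mul a (star x y) = circ (mul a x) (mul a y) := fun x y => by
    rw [hiso, hcomm _ a, hcomm a x, ha, hstar_eq]
  have hstar_loop : (∃ e₃, IsLoopOp star e₃) ∧ CIdent star ∧ CommOp star := by
    rw [hstar_eq]
    exact ⟨⟨a', hloop.isotope hinv.1 hcancel⟩, hC.isotope hcomm hle hre ha, hcomm.isotope ha⟩
  have hcirc : CIdent circ := hstar_loop.2.1.of_surjective_hom (hL a).2 hdistrib
  have hmul_circ : Isotopic mul circ :=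
    ⟨id, mul a, (mul · a), Function.bijective_id, hL a, hR a, hiso⟩
  have hdistrib_left : ∀ x y, mul a (star x y) = circ (mul a x) (mul y a) := fun x y => by
    rw [hdistrib, hcomm y]
  have hdistrib_right : ∀ x y, mul (star x y) a = circ (mul x a) (mul y a) := fun x y => by
    rw [hcomm _ a, hcomm x, hdistrib_left]
  rw [hstar2_eq]
  exact ⟨⟨⟨hC, hcomm⟩, ⟨hcirc, hcomm₂⟩, hstar_loop, hstar_loop⟩,
    ⟨hmul_circ, hmul_star, hmul_star, hmul_circ.symm.trans hmul_star,
      hmul_circ.symm.trans hmul_star, hmul_star.symm.trans hmul_star⟩,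
    ⟨hdistrib_left, hdistrib_right, hdistrib_left, hdistrib_right⟩⟩

/-- Let `(L,·)` be a commutative loop with identity `e` which is an
LC-loop, an RC-loop or a C-loop; let `a ∈ L` (with inverse `a⁻¹`), let `(L,∘)` be a
commutative loop with `(I, L_a, L_a)` an isotopism from `(L,·)` to `(L,∘)`, let
`∗ = F_{a⁻¹,e}` and `⋆ = F_{e,a⁻¹}`. Then `(L,·)`, `(L,∘)`, `(L,∗)`, `(L,⋆)` are
pairwise isotopic commutative C-loops and the generalized distributive laws
a·(x∗y) = (a·x)∘(y·a), (x∗y)·a = (x·a)∘(y·a), a·(x⋆y) = (a·x)∘(y·a) and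
(x⋆y)·a = (x·a)∘(y·a) hold. -/
theorem stmt5 {L : Type*} (mul circ star star2 : L → L → L) (e e₂ a a' : L)
    (hloop : IsLoopOp mul e) (hcomm : CommOp mul)
    (hkind : LCIdent mul ∨ RCIdent mul ∨ CIdent mul)
    (hinv : mul a a' = e ∧ mul a' a = e)
    (hloop₂ : IsLoopOp circ e₂) (hcomm₂ : CommOp circ)
    (hiso : ∀ x y, circ x (mul a y) = mul (mul x y) a)
    (hstar : ∀ x y, star (mul x e) (mul a' y) = mul x y)
    (hstar2 : ∀ x y, star2 (mul x a') (mul e y) = mul x y) :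
    ((CIdent mul ∧ CommOp mul) ∧ (CIdent circ ∧ CommOp circ) ∧
     ((∃ e₃, IsLoopOp star e₃) ∧ CIdent star ∧ CommOp star) ∧
     ((∃ e₄, IsLoopOp star2 e₄) ∧ CIdent star2 ∧ CommOp star2)) ∧
    (Isotopic mul circ ∧ Isotopic mul star ∧ Isotopic mul star2 ∧
     Isotopic circ star ∧ Isotopic circ star2 ∧ Isotopic star star2) ∧
    ((∀ x y, mul a (star x y) = circ (mul a x) (mul y a)) ∧
     (∀ x y, mul (star x y) a = circ (mul x a) (mul y a)) ∧
     (∀ x y, mul a (star2 x y) = circ (mul a x) (mul y a)) ∧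
     (∀ x y, mul (star2 x y) a = circ (mul x a) (mul y a))) :=
  stmt5_general mul circ star star2 e a a' hloop hcomm hkind hinv hcomm₂ hiso hstar hstar2
end

section
/- Let (L,·) be an LC-loop with identity e, let a ∈ L and set A = L_a, and let (L,∘) be a loop such that (A,I,A) is an isotopism of (L,·) onto (L,∘), i.e. (a·x) ∘ y = a·(x·y) for all x,y. Let a⁻¹ be the left inverse of a (the unique element with a⁻¹·a = e) and let ∗ denote the operation of the f,g-isotope F_{a⁻¹,e}. Then: (1) ∘ coincides with the left derivative F^{a⁻¹} of (L,·) with respect to a⁻¹; (2) A = L_a is an isomorphism of (L,∗) onto (L,∘); (3) the generalized left distributive law a·(x∗y) = (a·x)∘(a·y) holds for all x,y ∈ L. -/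
/-!
In an LC-loop the left inverse `a'` of `a` satisfies the left inverse property `a'·(a·z) = z`:
the LC identity with `x = a'`, `y = a` reads `a'·z = a'·(a'·(a·z))`, and `a'` can be cancelled.
Hence `L_{a'} = L_a⁻¹`, the isotope is `x ∗ y = x·(a·y)`, and all three claims are rewritings of
`(a·x) ∘ y = a·(x·y)`.
-/

open Function

section
variable {L : Type*} {mul : L → L → L} {e a a' : L}

theorem LCIdent.leftInverse_mul_of_mul_eq (hLC : LCIdent mul) (hre : ∀ x, mul x e = x)
    (hinj : Injective (mul a')) (hinv : mul a' a = e) : LeftInverse (mul a') (mul a) := by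
  intro z
  have h := hLC a' a z
  rw [hinv, hre] at h
  exact (hinj h).symm

theorem isotope_eq_mul_mul (star : L → L → L) (hre : ∀ x, mul x e = x)
    (hcancel : LeftInverse (mul a') (mul a))
    (hstar : ∀ x y, star (mul x e) (mul a' y) = mul x y) (x y : L) :
    star x y = mul x (mul a y) := by
  simpa only [hre, hcancel y] using hstar x (mul a y)

theorem mul_circ_eq_of_isotopism (circ : L → L → L)
    (hiso : ∀ x y, circ (mul a x) y = mul a (mul x y))
    (hcancel : LeftInverse (mul a') (mul a)) (hcancel' : RightInverse (mul a') (mul a))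
    (x y : L) : mul a' (circ x y) = mul (mul a' x) y :=
  calc mul a' (circ x y) = mul a' (circ (mul a (mul a' x)) y) := by rw [hcancel' x]
    _ = mul (mul a' x) y := by rw [hiso, hcancel]

end

theorem stmt6_general {L : Type*} (mul circ star : L → L → L) (e a a' : L)
    (hloop : IsLoopOp mul e) (hLC : LCIdent mul)
    (hinv : mul a' a = e)
    (hiso : ∀ x y, circ (mul a x) y = mul a (mul x y))
    (hstar : ∀ x y, star (mul x e) (mul a' y) = mul x y) :
    (∀ x y, mul a' (circ x y) = mul (mul a' x) y) ∧
    (Function.Bijective (fun x => mul a x) ∧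
      ∀ x y, mul a (star x y) = circ (mul a x) (mul a y)) ∧
    (∀ x y, mul a (star x y) = circ (mul a x) (mul a y)) := by
  obtain ⟨-, hre, hlb, -⟩ := hloop
  have hcancel := hLC.leftInverse_mul_of_mul_eq hre (hlb a').1 hinv
  have hcancel' := hcancel.rightInverse_of_surjective (hlb a).2
  have hdistrib : ∀ x y, mul a (star x y) = circ (mul a x) (mul a y) := fun x y => by
    rw [isotope_eq_mul_mul star hre hcancel hstar, hiso]
  exact ⟨mul_circ_eq_of_isotopism circ hiso hcancel hcancel', ⟨hlb a, hdistrib⟩, hdistrib⟩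

/-- Let `(L,·)` be an LC-loop with identity `e`, `a ∈ L`, and `(L,∘)`
a loop such that `(L_a, I, L_a)` is an isotopism of `(L,·)` onto `(L,∘)`
(i.e. (a·x) ∘ y = a·(x·y)). With `a⁻¹` the left inverse of `a` and `∗ = F_{a⁻¹,e}`:
(1) `∘` coincides with the left derivative `F^{a⁻¹}` (a⁻¹·(x∘y) = (a⁻¹·x)·y);
(2) `L_a` is an isomorphism of `(L,∗)` onto `(L,∘)`;
(3) a·(x∗y) = (a·x)∘(a·y) for all x, y. -/
theorem stmt6 {L : Type*} (mul circ star : L → L → L) (e e₂ a a' : L)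
    (hloop : IsLoopOp mul e) (hLC : LCIdent mul)
    (hinv : mul a' a = e)
    (hloop₂ : IsLoopOp circ e₂)
    (hiso : ∀ x y, circ (mul a x) y = mul a (mul x y))
    (hstar : ∀ x y, star (mul x e) (mul a' y) = mul x y) :
    (∀ x y, mul a' (circ x y) = mul (mul a' x) y) ∧
    (Function.Bijective (fun x => mul a x) ∧
      ∀ x y, mul a (star x y) = circ (mul a x) (mul a y)) ∧
    (∀ x y, mul a (star x y) = circ (mul a x) (mul a y)) :=
  stmt6_general mul circ star e a a' hloop hLC hinv hiso hstar
end

section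
/- Let (L,·) be an RC-loop with identity e, let a ∈ L and set B = R_a, and let (L,∘) be a loop such that (I,B,B) is an isotopism of (L,·) onto (L,∘), i.e. x ∘ (y·a) = (x·y)·a for all x,y. Let a⁻¹ be the right inverse of a (the unique element with a·a⁻¹ = e) and let ⋆ denote the operation of the f,g-isotope F_{e,a⁻¹}. Then: (1) ∘ coincides with the right derivative F_{a⁻¹} of (L,·) with respect to a⁻¹; (2) B = R_a is an isomorphism of (L,⋆) onto (L,∘); (3) the generalized right distributive law (x⋆y)·a = (x·a)∘(y·a) holds for all x,y ∈ L. -/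
/-! In an RC-loop, `b·c = e` already forces `(y·b)·c = y`: the RC identity with `x = c`, `z = b`
gives `((y·b)·c)·c = y·c`, and `c` cancels on the right. Hence the right inverse `a⁻¹` is
two-sided and `R_a`, `R_{a⁻¹}` are mutually inverse. Substituting `y = (y·a⁻¹)·a` into the
isotopism gives `x ∘ y = (x·(y·a⁻¹))·a`, which is (1). The defining equation of `⋆` at `x·a`
reads `x ⋆ y = (x·a)·y`, so (3) is the isotopism equation, and (2) adds only that `R_a` is
bijective. -/

namespace RCIdent

variable {L : Type*} {mul : L → L → L} {e : L}

theorem mul_mul_eq_self_of_mul_eq (hloop : IsLoopOp mul e) (hRC : RCIdent mul) {b c : L}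
    (hbc : mul b c = e) (y : L) : mul (mul y b) c = y :=
  (hloop.2.2.2 c).1 <| by simpa only [hbc, hloop.1] using hRC c y b

theorem mul_eq_identity_comm (hloop : IsLoopOp mul e) (hRC : RCIdent mul) {b c : L}
    (hbc : mul b c = e) : mul c b = e :=
  (hloop.2.2.2 c).1 <| by simpa only [hloop.1] using mul_mul_eq_self_of_mul_eq hloop hRC hbc c

theorem isotope_eq_rightDerivative (hloop : IsLoopOp mul e) (hRC : RCIdent mul) {a a' : L}
    (hinv : mul a a' = e) {circ : L → L → L}
    (hiso : ∀ x y, circ x (mul y a) = mul (mul x y) a) (x y : L) :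
    mul (circ x y) a' = mul x (mul y a') := by
  have hinv' := mul_eq_identity_comm hloop hRC hinv
  calc mul (circ x y) a' = mul (circ x (mul (mul y a') a)) a' := by
        rw [mul_mul_eq_self_of_mul_eq hloop hRC hinv' y]
    _ = mul (mul (mul x (mul y a')) a) a' := by rw [hiso]
    _ = mul x (mul y a') := mul_mul_eq_self_of_mul_eq hloop hRC hinv _

theorem fgIsotope_eq (hloop : IsLoopOp mul e) (hRC : RCIdent mul) {a a' : L}
    (hinv : mul a a' = e) {star : L → L → L}
    (hstar : ∀ x y, star (mul x a') (mul e y) = mul x y) (x y : L) :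
    star x y = mul (mul x a) y := by
  simpa only [mul_mul_eq_self_of_mul_eq hloop hRC hinv, hloop.1] using hstar (mul x a) y

end RCIdent

theorem stmt7_general {L : Type*} (mul circ star2 : L → L → L) (e a a' : L)
    (hloop : IsLoopOp mul e) (hRC : RCIdent mul)
    (hinv : mul a a' = e)
    (hiso : ∀ x y, circ x (mul y a) = mul (mul x y) a)
    (hstar2 : ∀ x y, star2 (mul x a') (mul e y) = mul x y) :
    (∀ x y, mul (circ x y) a' = mul x (mul y a')) ∧
    (Function.Bijective (fun x => mul x a) ∧
      ∀ x y, mul (star2 x y) a = circ (mul x a) (mul y a)) ∧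
    (∀ x y, mul (star2 x y) a = circ (mul x a) (mul y a)) := by
  have distrib : ∀ x y, mul (star2 x y) a = circ (mul x a) (mul y a) := fun x y => by
    rw [RCIdent.fgIsotope_eq hloop hRC hinv hstar2, hiso]
  exact ⟨RCIdent.isotope_eq_rightDerivative hloop hRC hinv hiso, ⟨hloop.2.2.2 a, distrib⟩, distrib⟩

/-- Let `(L,·)` be an RC-loop with identity `e`, `a ∈ L`, and `(L,∘)`
a loop such that `(I, R_a, R_a)` is an isotopism of `(L,·)` onto `(L,∘)`
(i.e. x ∘ (y·a) = (x·y)·a). With `a⁻¹` the right inverse of `a` and `⋆ = F_{e,a⁻¹}`: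
(1) `∘` coincides with the right derivative `F_{a⁻¹}` ((x∘y)·a⁻¹ = x·(y·a⁻¹));
(2) `R_a` is an isomorphism of `(L,⋆)` onto `(L,∘)`;
(3) (x⋆y)·a = (x·a)∘(y·a) for all x, y. -/
theorem stmt7 {L : Type*} (mul circ star2 : L → L → L) (e e₂ a a' : L)
    (hloop : IsLoopOp mul e) (hRC : RCIdent mul)
    (hinv : mul a a' = e)
    (hloop₂ : IsLoopOp circ e₂)
    (hiso : ∀ x y, circ x (mul y a) = mul (mul x y) a)
    (hstar2 : ∀ x y, star2 (mul x a') (mul e y) = mul x y) :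
    (∀ x y, mul (circ x y) a' = mul x (mul y a')) ∧
    (Function.Bijective (fun x => mul x a) ∧
      ∀ x y, mul (star2 x y) a = circ (mul x a) (mul y a)) ∧
    (∀ x y, mul (star2 x y) a = circ (mul x a) (mul y a)) :=
  stmt7_general mul circ star2 e a a' hloop hRC hinv hiso hstar2
end

section
/- Let (L,·) be a central square C-loop with identity e and let a ∈ L with two-sided inverse a⁻¹. (1) If A = L_a and (L,∘) is a loop such that (A,I,A) is an isotopism of (L,·) onto (L,∘), then ∘ coincides with the left derivative F^{a⁻¹}, L_a is an isomorphism of (L,F_{a⁻¹,e}) onto (L,∘), and a·(x∗y) = (a·x)∘(a·y) for all x,y, where ∗ is the operation of F_{a⁻¹,e}. (2) If B = R_a and (L,∘) is a loop such that (I,B,B) is an isotopism of (L,·) onto (L,∘), then ∘ coincides with the right derivative F_{a⁻¹}, R_a is an isomorphism of (L,F_{e,a⁻¹}) onto (L,∘), and (x⋆y)·a = (x·a)∘(y·a) for all x,y, where ⋆ is the operation of F_{e,a⁻¹}. -/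
/-!
In a C-loop, `a⁻¹ · (a · w) = w`: the C identity with `y = a⁻¹`, `x = a` collapses
`((a⁻¹·a)·a)·z` to `a·z`. Hence `L_{a⁻¹}` inverts `L_a`, and the isotopism relation
`(a·x) ∘ y = a·(x·y)` can be solved for `∘` and transported along `L_a`. The C identity
is invariant under passing to the opposite operation, which turns the statement about
`(I, R_a, R_a)` into the one about `(L_a, I, L_a)`.
-/

section

variable {L : Type*} {mul circ star : L → L → L} {e a a' : L}

theorem IsLoopOp.flip (h : IsLoopOp mul e) : IsLoopOp (flip mul) e :=
  ⟨h.2.1, h.1, h.2.2.2, h.2.2.1⟩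

theorem CIdent.flip (hC : CIdent mul) : CIdent (flip mul) :=
  fun x y z => (hC x z y).symm

theorem CIdent.inv_mul_cancel_left_s8 (hC : CIdent mul) (he : ∀ x, mul e x = x)
    (hsurj : Function.Surjective fun x => mul a x) (ha : mul a' a = e) (w : L) :
    mul a' (mul a w) = w := by
  obtain ⟨z, rfl⟩ := hsurj w
  have h := hC a a' z
  rw [ha, he] at h
  exact h.symm

theorem eq_leftDerivative_of_isotopism (hcancel : ∀ w, mul a' (mul a w) = w)
    (hsurj : Function.Surjective fun x => mul a x)
    (hiso : ∀ x y, circ (mul a x) y = mul a (mul x y)) (x y : L) :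
    mul a' (circ x y) = mul (mul a' x) y := by
  obtain ⟨u, rfl⟩ := hsurj x
  rw [hiso, hcancel, hcancel]

theorem mul_star_eq_circ_mul_mul_of_isotopism (hcancel : ∀ w, mul a' (mul a w) = w)
    (he : ∀ x, mul x e = x) (hstar : ∀ x y, star (mul x e) (mul a' y) = mul x y)
    (hiso : ∀ x y, circ (mul a x) y = mul a (mul x y)) (x y : L) :
    mul a (star x y) = circ (mul a x) (mul a y) := by
  have h := hstar x (mul a y)
  rw [he, hcancel] at h
  rw [h, hiso]

theorem CIdent.left_isotope (hC : CIdent mul) (hloop : IsLoopOp mul e) (ha : mul a' a = e)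
    (hiso : ∀ x y, circ (mul a x) y = mul a (mul x y))
    (hstar : ∀ x y, star (mul x e) (mul a' y) = mul x y) :
    (∀ x y, mul a' (circ x y) = mul (mul a' x) y) ∧
      Function.Bijective (fun x => mul a x) ∧
      ∀ x y, mul a (star x y) = circ (mul a x) (mul a y) := by
  obtain ⟨hid_l, hid_r, hLbij, -⟩ := hloop
  have hcancel := hC.inv_mul_cancel_left_s8 hid_l (hLbij a).2 ha
  exact ⟨eq_leftDerivative_of_isotopism hcancel (hLbij a).2 hiso, hLbij a,
    mul_star_eq_circ_mul_mul_of_isotopism hcancel hid_r hstar hiso⟩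

end

theorem stmt8_general {L : Type*} (mul circ1 circ2 star star2 : L → L → L) (e a a' : L)
    (hloop : IsLoopOp mul e) (hC : CIdent mul)
    (hinv : mul a a' = e ∧ mul a' a = e)
    (hiso1 : ∀ x y, circ1 (mul a x) y = mul a (mul x y))
    (hiso2 : ∀ x y, circ2 x (mul y a) = mul (mul x y) a)
    (hstar : ∀ x y, star (mul x e) (mul a' y) = mul x y)
    (hstar2 : ∀ x y, star2 (mul x a') (mul e y) = mul x y) :
    ((∀ x y, mul a' (circ1 x y) = mul (mul a' x) y) ∧
     (Function.Bijective (fun x => mul a x) ∧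
       ∀ x y, mul a (star x y) = circ1 (mul a x) (mul a y))) ∧
    ((∀ x y, mul (circ2 x y) a' = mul x (mul y a')) ∧
     (Function.Bijective (fun x => mul x a) ∧
       ∀ x y, mul (star2 x y) a = circ2 (mul x a) (mul y a))) := by
  have right := hC.flip.left_isotope (circ := flip circ2) (star := flip star2) hloop.flip hinv.1
    (fun x y => hiso2 y x) (fun x y => hstar2 y x)
  exact ⟨hC.left_isotope hloop hinv.2 hiso1 hstar,
    fun x y => right.1 y x, right.2.1, fun x y => right.2.2 y x⟩

/-- Let `(L,·)` be a central square C-loop with identity `e` and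
`a ∈ L` with two-sided inverse `a⁻¹`.
(1) If `(L,∘₁)` is a loop with `(L_a, I, L_a)` an isotopism of `(L,·)` onto `(L,∘₁)`,
then `∘₁` coincides with the left derivative `F^{a⁻¹}`, `L_a` is an isomorphism of
`(L, F_{a⁻¹,e})` onto `(L,∘₁)`, and a·(x∗y) = (a·x)∘₁(a·y) for all x,y.
(2) If `(L,∘₂)` is a loop with `(I, R_a, R_a)` an isotopism of `(L,·)` onto `(L,∘₂)`,
then `∘₂` coincides with the right derivative `F_{a⁻¹}`, `R_a` is an isomorphism of
`(L, F_{e,a⁻¹})` onto `(L,∘₂)`, and (x⋆y)·a = (x·a)∘₂(y·a) for all x,y. -/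
theorem stmt8 {L : Type*} (mul circ1 circ2 star star2 : L → L → L) (e e₂ e₃ a a' : L)
    (hloop : IsLoopOp mul e) (hC : CIdent mul) (hcs : CentralSquareOp mul)
    (hinv : mul a a' = e ∧ mul a' a = e)
    (hloop₂ : IsLoopOp circ1 e₂)
    (hiso1 : ∀ x y, circ1 (mul a x) y = mul a (mul x y))
    (hloop₃ : IsLoopOp circ2 e₃)
    (hiso2 : ∀ x y, circ2 x (mul y a) = mul (mul x y) a)
    (hstar : ∀ x y, star (mul x e) (mul a' y) = mul x y)
    (hstar2 : ∀ x y, star2 (mul x a') (mul e y) = mul x y) :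
    ((∀ x y, mul a' (circ1 x y) = mul (mul a' x) y) ∧
     (Function.Bijective (fun x => mul a x) ∧
       ∀ x y, mul a (star x y) = circ1 (mul a x) (mul a y))) ∧
    ((∀ x y, mul (circ2 x y) a' = mul x (mul y a')) ∧
     (Function.Bijective (fun x => mul x a) ∧
       ∀ x y, mul (star2 x y) a = circ2 (mul x a) (mul y a))) :=
  stmt8_general mul circ1 circ2 star star2 e a a' hloop hC hinv hiso1 hiso2 hstar hstar2
end

section
/- Let (G,·) and (H,∘) be loops on the same underlying set. If the triple (A,B,B) is an isotopism from (G,·) to (H,∘), then (G,·) is an LC-loop if and only if (H,∘) is an LC-loop. If the triple (A,B,A) is an isotopism from (G,·) to (H,∘), then (G,·) is an RC-loop if and only if (H,∘) is an RC-loop. -/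
/-!
In a loop, `LCIdent` says exactly that every composite `L_a ∘ L_a ∘ L_b` of left translations is
again a left translation (evaluate at the identity to find which one). An isotopism `(A, B, B)`
gives `L∘_{A x} = B ∘ L_x ∘ B⁻¹`, so conjugation by `B` carries the left translations of `·` onto
those of `∘`, together with this closure property. The RC case is the LC case for the opposite
operations, to which `(A, B, A)` becomes the isotopism `(B, A, A)`.
-/

open Function

section Isotopism

variable {L : Type*} {mul circ : L → L → L}

lemma lcIdent_iff_exists_leftMul_eq {e : L} (hr : ∀ x, mul x e = x) :
    LCIdent mul ↔ ∀ a b, ∃ d, mul d = mul a ∘ mul a ∘ mul b := by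
  constructor
  · exact fun h a b => ⟨mul a (mul a b), funext (h a b)⟩
  · intro h x y z
    obtain ⟨d, hd⟩ := h x y
    have hd_eq : d = mul x (mul x y) := by simpa [hr] using congrFun hd e
    exact hd_eq ▸ congrFun hd z

lemma exists_leftMul_eq_iff_of_semiconj {A B : L → L} (hA : Surjective A) (hB : Bijective B)
    (hiso : ∀ x, Semiconj B (mul x) (circ (A x))) {f g : L → L} (hfg : Semiconj B f g) :
    (∃ d, mul d = f) ↔ ∃ d, circ d = g := by
  rw [semiconj_iff_comp_eq] at hfg
  simp_rw [semiconj_iff_comp_eq] at hiso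
  constructor
  · rintro ⟨d, rfl⟩
    exact ⟨A d, hB.2.injective_comp_right ((hiso d).symm.trans hfg)⟩
  · rintro ⟨d', rfl⟩
    obtain ⟨d, rfl⟩ := hA d'
    exact ⟨d, hB.1.comp_left ((hiso d).trans hfg.symm)⟩

theorem lcIdent_iff_of_isotopism {e₁ e₂ : L} (hr₁ : ∀ x, mul x e₁ = x) (hr₂ : ∀ x, circ x e₂ = x)
    {A B : L → L} (hA : Surjective A) (hB : Bijective B)
    (hiso : ∀ x y, circ (A x) (B y) = B (mul x y)) :
    LCIdent mul ↔ LCIdent circ := by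
  have hconj : ∀ x, Semiconj B (mul x) (circ (A x)) := fun x y => (hiso x y).symm
  rw [lcIdent_iff_exists_leftMul_eq hr₁, lcIdent_iff_exists_leftMul_eq hr₂,
    hA.forall₂ (p := fun a b => ∃ d, circ d = circ a ∘ circ a ∘ circ b)]
  exact forall₂_congr fun a b => exists_leftMul_eq_iff_of_semiconj hA hB hconj <|
    (hconj a).comp_right ((hconj a).comp_right (hconj b))

lemma rcIdent_iff_lcIdent_flip : RCIdent mul ↔ LCIdent (flip mul) :=
  ⟨fun h x y z => (h x z y).symm, fun h x y z => (h x z y).symm⟩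

theorem rcIdent_iff_of_isotopism {e₁ e₂ : L} (hl₁ : ∀ x, mul e₁ x = x) (hl₂ : ∀ x, circ e₂ x = x)
    {A B : L → L} (hA : Bijective A) (hB : Surjective B)
    (hiso : ∀ x y, circ (A x) (B y) = A (mul x y)) :
    RCIdent mul ↔ RCIdent circ := by
  rw [rcIdent_iff_lcIdent_flip, rcIdent_iff_lcIdent_flip]
  exact lcIdent_iff_of_isotopism hl₁ hl₂ hB hA fun y x => hiso x y

end Isotopism

/-- Let `(G,·)` and `(H,∘)` be loops on the same underlying set.
If `(A,B,B)` is an isotopism from `(G,·)` to `(H,∘)`, then `(G,·)` is an LC-loop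
iff `(H,∘)` is an LC-loop. If `(A,B,A)` is an isotopism from `(G,·)` to `(H,∘)`,
then `(G,·)` is an RC-loop iff `(H,∘)` is an RC-loop. -/
theorem stmt14 {L : Type*} (mul circ : L → L → L) (e₁ e₂ : L)
    (hloop₁ : IsLoopOp mul e₁) (hloop₂ : IsLoopOp circ e₂) :
    (∀ A B : L → L, Function.Bijective A → Function.Bijective B →
      (∀ x y, circ (A x) (B y) = B (mul x y)) → (LCIdent mul ↔ LCIdent circ)) ∧
    (∀ A B : L → L, Function.Bijective A → Function.Bijective B →
      (∀ x y, circ (A x) (B y) = A (mul x y)) → (RCIdent mul ↔ RCIdent circ)) :=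
  ⟨fun _ _ hA hB hiso => lcIdent_iff_of_isotopism hloop₁.2.1 hloop₂.2.1 hA.2 hB hiso,
    fun _ _ hA hB hiso => rcIdent_iff_of_isotopism hloop₁.1 hloop₂.1 hA hB.2 hiso⟩
end

section
/- Let (G,·) and (H,∘) be commutative loops on the same underlying set. If a triple of the form (A,B,B) or of the form (A,B,A) is an isotopism from (G,·) to (H,∘), then (G,·) is a C-loop if and only if (H,∘) is a C-loop. -/
/-!
With `L_x`, `L°_x` the left translations of `·`, `∘`, an isotopism `(A, B, B)` says
`L°_{A x} ∘ B = B ∘ L_x`: the left translations of `∘` are the conjugates by `B` of those of `·`. The C identity `L_{(y·x)·x} = L_y L_x L_x` is therefore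
transported to `L°_{A((y·x)·x)} = L°_{A y} L°_{A x} L°_{A x}`; evaluating at the identity gives
`A((y·x)·x) = A y ∘ (A x ∘ A x)`, so `L°_{v∘(u∘u)} = L°_v L°_u L°_u`, which in a commutative
loop is equivalent to the C identity. The inverse triple handles the converse, and commutativity
turns an isotopism `(A, B, A)` into one of the form `(B, A, A)`.
-/

section Isotopism

variable {L : Type*} {mul circ : L → L → L}

theorem CIdent.of_mul_sq_mul {e : L} (he : ∀ x, circ e x = x) (hcomm : CommOp circ)
    (h : ∀ u v w, circ (circ v (circ u u)) w = circ v (circ u (circ u w))) :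
    CIdent circ := by
  have hleft : ∀ u w, circ (circ u u) w = circ u (circ u w) := fun u w => by
    simpa only [he] using h u e w
  have hright : ∀ x y, circ (circ y x) x = circ y (circ x x) := fun x y => by
    rw [hcomm (circ y x), hcomm y, ← hleft, hcomm]
  intro x y z
  rw [hright, h]

theorem leftMul_conj_of_isotopism {A B : L → L} (hB : Function.Surjective B)
    (hiso : ∀ x y, circ (A x) (B y) = B (mul x y)) (hC : CIdent mul) (x y w : L) :
    circ (A (mul (mul y x) x)) w = circ (A y) (circ (A x) (circ (A x) w)) := by
  obtain ⟨z, rfl⟩ := hB w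
  rw [hiso, hiso, hiso, hiso, hC]

theorem mul_sq_mul_of_isotopism {A B : L → L} {e : L} (hA : Function.Surjective A)
    (hB : Function.Surjective B) (hiso : ∀ x y, circ (A x) (B y) = B (mul x y))
    (hC : CIdent mul) (he : ∀ x, circ e x = x) (hcomm : CommOp circ) (u v w : L) :
    circ (circ v (circ u u)) w = circ v (circ u (circ u w)) := by
  have hconj := leftMul_conj_of_isotopism hB hiso hC
  have hA_cube : ∀ x y, A (mul (mul y x) x) = circ (A y) (circ (A x) (A x)) := fun x y => by
    simpa only [hcomm _ e, he] using hconj x y e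
  obtain ⟨x, rfl⟩ := hA u
  obtain ⟨y, rfl⟩ := hA v
  rw [← hA_cube, hconj]

theorem cIdent_of_isotopism {A B : L → L} {e : L} (hA : Function.Surjective A)
    (hB : Function.Surjective B) (hiso : ∀ x y, circ (A x) (B y) = B (mul x y))
    (he : ∀ x, circ e x = x) (hcomm : CommOp circ) (hC : CIdent mul) : CIdent circ :=
  .of_mul_sq_mul he hcomm (mul_sq_mul_of_isotopism hA hB hiso hC he hcomm)

theorem isotopism_symm {A B : L ≃ L} (hiso : ∀ x y, circ (A x) (B y) = B (mul x y))
    (u v : L) : mul (A.symm u) (B.symm v) = B.symm (circ u v) := by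
  rw [B.eq_symm_apply, ← hiso, A.apply_symm_apply, B.apply_symm_apply]

theorem isotopism_swap {A B : L → L} (hcomm₁ : CommOp mul) (hcomm₂ : CommOp circ)
    (hiso : ∀ x y, circ (A x) (B y) = A (mul x y)) (x y : L) :
    circ (B x) (A y) = A (mul x y) := by
  rw [hcomm₂, hiso, hcomm₁]

theorem cIdent_iff_of_isotopism {A B : L ≃ L} {e₁ e₂ : L}
    (he₁ : ∀ x, mul e₁ x = x) (hcomm₁ : CommOp mul)
    (he₂ : ∀ x, circ e₂ x = x) (hcomm₂ : CommOp circ)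
    (hiso : ∀ x y, circ (A x) (B y) = B (mul x y)) :
    CIdent mul ↔ CIdent circ :=
  ⟨cIdent_of_isotopism A.surjective B.surjective hiso he₂ hcomm₂,
    cIdent_of_isotopism A.symm.surjective B.symm.surjective (isotopism_symm hiso) he₁ hcomm₁⟩

end Isotopism

/-- Let `(G,·)` and `(H,∘)` be commutative loops on the same
underlying set. If a triple of the form `(A,B,B)` or `(A,B,A)` is an isotopism
from `(G,·)` to `(H,∘)`, then `(G,·)` is a C-loop iff `(H,∘)` is a C-loop. -/
theorem stmt16 {L : Type*} (mul circ : L → L → L) (e₁ e₂ : L)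
    (hloop₁ : IsLoopOp mul e₁) (hcomm₁ : CommOp mul)
    (hloop₂ : IsLoopOp circ e₂) (hcomm₂ : CommOp circ)
    (hiso : ∃ A B : L → L, Function.Bijective A ∧ Function.Bijective B ∧
      ((∀ x y, circ (A x) (B y) = B (mul x y)) ∨
       (∀ x y, circ (A x) (B y) = A (mul x y)))) :
    CIdent mul ↔ CIdent circ := by
  obtain ⟨A, B, hA, hB, hiso | hiso⟩ := hiso
  · exact cIdent_iff_of_isotopism (A := .ofBijective A hA) (B := .ofBijective B hB)
      hloop₁.1 hcomm₁ hloop₂.1 hcomm₂ hiso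
  · exact cIdent_iff_of_isotopism (A := .ofBijective B hB) (B := .ofBijective A hA)
      hloop₁.1 hcomm₁ hloop₂.1 hcomm₂ (isotopism_swap hcomm₁ hcomm₂ hiso)
end
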